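/- Let α = \overline{01} (the string 010101⋯ repeating 01) and β = \overline{100} (the string 100100100⋯ repeating 100). Then (α,β) is an admissible pair, and a decimal d belongs to Ω^•_{(α,β)} if and only if d contains neither 11 nor 1000 as a substring, i.e., there is no j ∈ ℤ with d(j) = 1 and d(j+1) = 1, and no j ∈ ℤ with d(j) = 1 and d(j+1) = d(j+2) = d(j+3) = 0. -/

import Mathlib

open scoped Classical

/-- Infinite binary strings. -/
abbrev Omega : Type := ℕ → Bool

/-- The shift operator. -/
def shift (ω : Omega) : Omega := fun n => ω (n + 1)

/-- Strict lexicographic order on `Omega`. -/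
def lexLt (σ ω : Omega) : Prop :=
  ∃ k : ℕ, (∀ i, i < k → σ i = ω i) ∧ σ k < ω k

/-- Non-strict lexicographic order on `Omega`. -/
def lexLe (σ ω : Omega) : Prop := lexLt σ ω ∨ σ = ω

/-- An admissible pair of strings. -/
def Admissible (α β : Omega) : Prop :=
  α 0 = false ∧ α 1 = true ∧ β 0 = true ∧ β 1 = false ∧
  (∀ n : ℕ, ¬ (lexLt α (shift^[n] α) ∧ lexLe (shift^[n] α) β)) ∧
  (∀ n : ℕ, ¬ (lexLe α (shift^[n] β) ∧ lexLt (shift^[n] β) β))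

/-- The address space `Ω_{(α,β,−)}`. -/
def OmegaMinus (α β : Omega) : Set Omega :=
  {ω | ∀ n : ℕ, ¬ (lexLt α (shift^[n] ω) ∧ lexLe (shift^[n] ω) β)}

/-- The address space `Ω_{(α,β,+)}`. -/
def OmegaPlus (α β : Omega) : Set Omega :=
  {ω | ∀ n : ℕ, ¬ (lexLe α (shift^[n] ω) ∧ lexLt (shift^[n] ω) β)}

/-- The address space `Ω_{(α,β)}`. -/
def OmegaUnion (α β : Omega) : Set Omega := OmegaMinus α β ∪ OmegaPlus α β

/-- Length-`n` initial segments of the elements of `Γ`. -/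
def initSegs (Γ : Set Omega) (n : ℕ) : Set (Fin n → Bool) :=
  (fun ω (i : Fin n) => ω i) '' Γ

/-- Exponential growth rate `h(Γ)`. -/
noncomputable def growth (Γ : Set Omega) : ℝ :=
  Filter.limsup (fun n : ℕ => Real.log ((initSegs Γ n).ncard) / (n : ℝ)) Filter.atTop

/-- The projection map `π_x`. -/
noncomputable def proj (x : ℝ) (ω : Omega) : ℝ :=
  (1 - x) * ∑' k : ℕ, (if ω k then (1 : ℝ) else 0) * x ^ k

/-- The equation `Σ α_n x^n = Σ β_n x^n`. -/
def seriesEq (α β : Omega) (x : ℝ) : Prop :=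
  (∑' n : ℕ, (if α n then (1 : ℝ) else 0) * x ^ n) =
    (∑' n : ℕ, (if β n then (1 : ℝ) else 0) * x ^ n)

/-- Solutions in `[1/2,1)` of `Σ α_n x^n = Σ β_n x^n`. -/
def baseSet (α β : Omega) : Set ℝ :=
  {x : ℝ | x ∈ Set.Ico (1/2 : ℝ) 1 ∧ seriesEq α β x}

/-- A decimal: a two-sided binary string vanishing far to the left. -/
def IsDecimal (d : ℤ → Bool) : Prop := ∃ m : ℤ, ∀ j, j < m → d j = false

/-- Strict order on decimals. -/
def decLt (d e : ℤ → Bool) : Prop :=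
  ∃ j : ℤ, (∀ i, i < j → d i = e i) ∧ d j < e j

/-- The set `Γ^•` of decimals obtained from strings in `Γ`. -/
def dot (Γ : Set Omega) : Set (ℤ → Bool) :=
  {d | ∃ m : ℤ, ∃ γ ∈ Γ, (∀ j, j < m → d j = false) ∧ ∀ i : ℕ, d (m + i) = γ i}

/-- Prepend a `0` to a string. -/
def cons0 (ω : Omega) : Omega := fun n => match n with | 0 => false | k + 1 => ω k

/-- The space `Ω⁰_{(α,β,−)}`. -/
def Omega0Minus (α β : Omega) : Set Omega :=
  {ω ∈ OmegaMinus α β | lexLe (cons0 ω) α}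

/-- The space `Ω⁰_{(α,β,+)}`. -/
def Omega0Plus (α β : Omega) : Set Omega :=
  {ω ∈ OmegaPlus α β | lexLt (cons0 ω) α}

/-- The address space of decimals `Ω^•_{(α,β,−)}`. -/
def dotMinus (α β : Omega) : Set (ℤ → Bool) := dot (Omega0Minus α β)

/-- The address space of decimals `Ω^•_{(α,β,+)}`. -/
def dotPlus (α β : Omega) : Set (ℤ → Bool) := dot (Omega0Plus α β)

/-- The address space of decimals `Ω^•_{(α,β)}`. -/
def dotUnion (α β : Omega) : Set (ℤ → Bool) :=
  dot (Omega0Minus α β ∪ Omega0Plus α β)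

/-- The radix map `d ↦ Σ_{j ∈ ℤ} d(j)·B^(−j)`. -/
noncomputable def radixVal (B : ℝ) (d : ℤ → Bool) : ℝ :=
  ∑' j : ℤ, (if d j then (1 : ℝ) else 0) * B ^ (-j)

/-- Shift invariance for a set of decimals. -/
def ShiftInvariantDec (Γ : Set (ℤ → Bool)) : Prop :=
  ∀ d ∈ Γ, ∀ k m : ℤ,
    (fun j : ℤ => if m ≤ j then d (j + k) else false) ∈ Γ


/-!
A string avoiding `11` that exceeds `α = 0101⋯` lexicographically must start with `1` (it first
exceeds `α` by a `1` where `α` has a `0`, right after a `1` of `α`); if it is also below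
`β = 100100⋯`, it first drops below `β` by a `0` where `β` has a `1`, and since the ones of `β`
are three apart this produces `1000`. Conversely strings beginning with `011` or `1000` lie
strictly between `α` and `β`. So a string avoids both patterns iff none of its tails lies in the
open hole `(α, β)` and `0ω ⪯ α` (which excludes a leading `11`). The closed endpoints are
harmless: a tail of `α` never contains `00` while every tail of `β` does, so no string has tails
equal to both. Admissibility is the case `ω = α`, `ω = β` of the same argument, and leading zeros
of a decimal create no pattern.
-/

abbrev alt01 : Omega := fun n => decide (n % 2 = 1)

abbrev rep100 : Omega := fun n => decide (n % 3 = 0)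

theorem shift_iterate_apply (ω : Omega) (n i : ℕ) : shift^[n] ω i = ω (n + i) := by
  induction n generalizing i with
  | zero => simp
  | succ n ih =>
    rw [Function.iterate_succ_apply', shift, ih]
    exact congrArg ω (by omega)

theorem shift_cons0 (ω : Omega) : shift (cons0 ω) = ω := rfl

theorem not_lexLe_of_lexLt {σ ω : Omega} (h : lexLt ω σ) : ¬ lexLe σ ω := by
  obtain ⟨k, hk, hωσ⟩ := h
  rintro (⟨l, hl, hσω⟩ | rfl)
  · rcases lt_trichotomy k l with hkl | rfl | hlk
    · exact (hωσ.trans_eq (hl k hkl)).false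
    · exact (hωσ.trans hσω).false
    · exact (hσω.trans_eq (hk l hlk)).false
  · exact hωσ.false

theorem lexLe_of_not_lexLt {σ ω : Omega} (h : ¬ lexLt ω σ) : lexLe σ ω := by
  by_cases hne : ∃ k, σ k ≠ ω k
  · have hmin : ∀ i < Nat.find hne, σ i = ω i := fun i hi => not_not.mp (Nat.find_min hne hi)
    rcases (Nat.find_spec hne).lt_or_gt with hlt | hgt
    · exact Or.inl ⟨_, hmin, hlt⟩
    · exact absurd ⟨_, fun i hi => (hmin i hi).symm, hgt⟩ h
  · push Not at hne
    exact Or.inr (funext hne)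

section Patterns

variable {ι : Type*} [AddMonoidWithOne ι]

def Avoids11And1000 (f : ι → Bool) : Prop :=
  (∀ j, ¬ (f j = true ∧ f (j + 1) = true)) ∧
  (∀ j, ¬ (f j = true ∧ f (j + 1) = false ∧ f (j + 2) = false ∧ f (j + 3) = false))

theorem Avoids11And1000.comp_add_left {f : ι → Bool} (h : Avoids11And1000 f) (a : ι) :
    Avoids11And1000 (fun j => f (a + j)) := by
  refine ⟨fun j hj => h.1 (a + j) ?_, fun j hj => h.2 (a + j) ?_⟩ <;> simpa only [add_assoc]

end Patterns

theorem Avoids11And1000.shift_iterate {ω : Omega} (h : Avoids11And1000 ω) (n : ℕ) :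
    Avoids11And1000 (shift^[n] ω) := by
  simpa only [← shift_iterate_apply] using h.comp_add_left n

theorem avoids11And1000_cons0 {ω : Omega} (h : Avoids11And1000 ω) :
    Avoids11And1000 (cons0 ω) := by
  refine ⟨?_, ?_⟩
  · rintro (_ | j) hj
    exacts [Bool.false_ne_true hj.1, h.1 j hj]
  · rintro (_ | j) hj
    exacts [Bool.false_ne_true hj.1, h.2 j hj]

theorem avoids11And1000_alt01 : Avoids11And1000 alt01 := by
  refine ⟨fun j => ?_, fun j => ?_⟩ <;> simp only [decide_eq_true_eq, decide_eq_false_iff_not] <;>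
    omega

theorem avoids11And1000_rep100 : Avoids11And1000 rep100 := by
  refine ⟨fun j => ?_, fun j => ?_⟩ <;> simp only [decide_eq_true_eq, decide_eq_false_iff_not] <;>
    omega

theorem shift_iterate_alt01_ne_shift_iterate_rep100 (a b : ℕ) :
    shift^[a] alt01 ≠ shift^[b] rep100 := by
  intro h
  -- `2b + 1, 2b + 2` sit at positions `≡ 1, 2 (mod 3)` of `rep100`, where it has `00`.
  have h₁ := congrFun h (2 * b + 1)
  have h₂ := congrFun h (2 * b + 2)
  simp only [shift_iterate_apply, decide_eq_decide] at h₁ h₂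
  omega

def InHole (σ : Omega) : Prop := lexLt alt01 σ ∧ lexLt σ rep100

theorem head_eq_true_of_lexLt_alt01 {σ : Omega} (h11 : ∀ j, ¬ (σ j = true ∧ σ (j + 1) = true))
    (h : lexLt alt01 σ) : σ 0 = true := by
  obtain ⟨k, hk, hlt⟩ := h
  rw [Bool.lt_iff] at hlt
  rcases k with _ | j
  · exact hlt.2
  · refine absurd ⟨?_, hlt.2⟩ (h11 j)
    rw [← hk j j.lt_succ_self]
    simp only [decide_eq_true_eq, decide_eq_false_iff_not] at hlt ⊢
    omega

theorem Avoids11And1000.not_inHole {σ : Omega} (h : Avoids11And1000 σ) : ¬ InHole σ := by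
  rintro ⟨hα, l, hl, hlt⟩
  have h0 := head_eq_true_of_lexLt_alt01 h.1 hα
  rw [Bool.lt_iff] at hlt
  obtain ⟨hσl, hβl⟩ := hlt
  obtain ⟨j, rfl⟩ : ∃ j, l = j + 3 := by
    simp only [decide_eq_true_eq] at hβl
    rcases l with _ | _ | _ | j
    · exact absurd (h0.symm.trans hσl) (by decide)
    all_goals first | omega | exact ⟨j, rfl⟩
  refine h.2 j ⟨?_, ?_, ?_, hσl⟩ <;> rw [hl _ (by omega)] <;>
    simp only [decide_eq_true_eq, decide_eq_false_iff_not] at hβl ⊢ <;> omega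

theorem inHole_of_011 {σ : Omega} (h0 : σ 0 = false) (h1 : σ 1 = true) (h2 : σ 2 = true) :
    InHole σ := by
  refine ⟨⟨2, fun i hi => ?_, by rw [h2]; decide⟩, ⟨0, by simp, by rw [h0]; decide⟩⟩
  interval_cases i <;> simp [h0, h1]

theorem inHole_of_1000 {σ : Omega} (h0 : σ 0 = true) (h1 : σ 1 = false) (h2 : σ 2 = false)
    (h3 : σ 3 = false) : InHole σ := by
  refine ⟨⟨0, by simp, by rw [h0]; decide⟩, ⟨3, fun i hi => ?_, by rw [h3]; decide⟩⟩
  interval_cases i <;> simp [h0, h1, h2]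

theorem Avoids11And1000.cons0_lexLe_alt01 {ω : Omega} (h : Avoids11And1000 ω) :
    lexLe (cons0 ω) alt01 :=
  lexLe_of_not_lexLt fun hlt =>
    Bool.false_ne_true (head_eq_true_of_lexLt_alt01 (avoids11And1000_cons0 h).1 hlt)

theorem Avoids11And1000.mem_omegaMinus {ω : Omega} (h : Avoids11And1000 ω)
    (hβ : ∀ n, shift^[n] ω ≠ rep100) : ω ∈ OmegaMinus alt01 rep100 := by
  rintro n ⟨hα, hlt | heq⟩
  exacts [(h.shift_iterate n).not_inHole ⟨hα, hlt⟩, hβ n heq]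

theorem Avoids11And1000.mem_omegaPlus {ω : Omega} (h : Avoids11And1000 ω)
    (hα : ∀ n, shift^[n] ω ≠ alt01) : ω ∈ OmegaPlus alt01 rep100 := by
  rintro n ⟨hlt | heq, hβ⟩
  exacts [(h.shift_iterate n).not_inHole ⟨hlt, hβ⟩, hα n heq.symm]

theorem admissible_alt01_rep100 : Admissible alt01 rep100 :=
  ⟨rfl, rfl, rfl, rfl,
    avoids11And1000_alt01.mem_omegaMinus fun n => shift_iterate_alt01_ne_shift_iterate_rep100 n 0,
    avoids11And1000_rep100.mem_omegaPlus fun n h =>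
      shift_iterate_alt01_ne_shift_iterate_rep100 0 n h.symm⟩

theorem Avoids11And1000.mem_omega0 {ω : Omega} (h : Avoids11And1000 ω) :
    ω ∈ Omega0Minus alt01 rep100 ∪ Omega0Plus alt01 rep100 := by
  by_cases hβ : ∃ n₀, shift^[n₀] ω = rep100
  · obtain ⟨n₀, hn₀⟩ := hβ
    refine Or.inr ⟨h.mem_omegaPlus fun n hn => ?_, ?_⟩
    · apply shift_iterate_alt01_ne_shift_iterate_rep100 n₀ n
      rw [← hn, ← hn₀, ← Function.iterate_add_apply, ← Function.iterate_add_apply, add_comm]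
    · refine h.cons0_lexLe_alt01.resolve_right fun heq => ?_
      apply shift_iterate_alt01_ne_shift_iterate_rep100 (n₀ + 1) 0
      rw [Function.iterate_succ_apply, ← heq, shift_cons0, hn₀]
      rfl
  · push Not at hβ
    exact Or.inl ⟨h.mem_omegaMinus hβ, h.cons0_lexLe_alt01⟩

theorem avoids11And1000_of_not_inHole {ω : Omega} (hω : ∀ n, ¬ InHole (shift^[n] ω))
    (h0 : lexLe (cons0 ω) alt01) : Avoids11And1000 ω := by
  refine ⟨fun j => ?_, fun n ⟨h₀, h₁, h₂, h₃⟩ => hω n ?_⟩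
  · induction j with
    | zero =>
      rintro ⟨h₀, h₁⟩
      refine not_lexLe_of_lexLt ⟨2, fun i hi => ?_, ?_⟩ h0
      · interval_cases i
        exacts [rfl, h₀.symm]
      · show alt01 2 < ω (0 + 1)
        rw [h₁]
        decide
    | succ j ih =>
      rintro ⟨h₁, h₂⟩
      cases hj : ω j
      · exact hω j (by apply inHole_of_011 <;> rwa [shift_iterate_apply])
      · exact ih ⟨hj, h₁⟩
  · apply inHole_of_1000 <;> rwa [shift_iterate_apply]

theorem mem_omega0_iff_avoids11And1000 (ω : Omega) :
    ω ∈ Omega0Minus alt01 rep100 ∪ Omega0Plus alt01 rep100 ↔ Avoids11And1000 ω := by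
  refine ⟨fun hω => avoids11And1000_of_not_inHole (fun n hn => ?_) ?_, fun h => h.mem_omega0⟩
  · rcases hω with ⟨hm, _⟩ | ⟨hp, _⟩
    exacts [hm n ⟨hn.1, Or.inl hn.2⟩, hp n ⟨Or.inl hn.1, hn.2⟩]
  · rcases hω with ⟨_, h⟩ | ⟨_, h⟩
    exacts [h, Or.inl h]

theorem avoids11And1000_int_iff {d : ℤ → Bool} {m : ℤ} (hd : ∀ j < m, d j = false) :
    Avoids11And1000 d ↔ Avoids11And1000 (fun i : ℕ => d (m + i)) := by
  have hcast (i : ℕ) (k : ℕ) : d (m + ↑(i + k)) = d (m + i + k) := by push_cast; ring_nf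
  refine ⟨fun h => ?_, fun h => ⟨fun j hj => ?_, fun j hj => ?_⟩⟩
  · refine ⟨fun i hi => h.1 (m + i) ?_, fun i hi => h.2 (m + i) ?_⟩ <;>
      simpa only [hcast, Nat.cast_one, Nat.cast_ofNat] using hi
  all_goals
    obtain ⟨i, rfl⟩ : ∃ i : ℕ, j = m + i := by
      have : m ≤ j := not_lt.mp fun hj' => Bool.false_ne_true ((hd j hj').symm.trans hj.1)
      exact ⟨(j - m).toNat, by omega⟩
  · exact h.1 i (by simpa only [hcast, Nat.cast_one, Nat.cast_ofNat] using hj)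
  · exact h.2 i (by simpa only [hcast, Nat.cast_one, Nat.cast_ofNat] using hj)

theorem mem_dot_setOf_avoids11And1000_iff {d : ℤ → Bool} (hd : IsDecimal d) :
    d ∈ dot {ω | Avoids11And1000 ω} ↔ Avoids11And1000 d := by
  constructor
  · rintro ⟨m, γ, hγ, hzero, hγd⟩
    rw [avoids11And1000_int_iff hzero, funext hγd]
    exact hγ
  · intro h
    obtain ⟨m, hm⟩ := hd
    exact ⟨m, _, (avoids11And1000_int_iff hm).mp h, hm, fun _ => rfl⟩

/-- For `α = \overline{01}` and `β = \overline{100}`, the pair `(α,β)` is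
admissible and a decimal lies in `Ω^•_{(α,β)}` iff it contains neither `11` nor `1000`
as a substring. -/
theorem stmt_5 :
    Admissible (fun n => decide (n % 2 = 1)) (fun n => decide (n % 3 = 0)) ∧
    ∀ d : ℤ → Bool, IsDecimal d →
      (d ∈ dotUnion (fun n => decide (n % 2 = 1)) (fun n => decide (n % 3 = 0)) ↔
        (¬ ∃ j : ℤ, d j = true ∧ d (j + 1) = true) ∧
        (¬ ∃ j : ℤ, d j = true ∧ d (j + 1) = false ∧ d (j + 2) = false ∧
          d (j + 3) = false)) := by
  refine ⟨admissible_alt01_rep100, fun d hd => ?_⟩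
  have hΩ₀ : Omega0Minus alt01 rep100 ∪ Omega0Plus alt01 rep100 = {ω | Avoids11And1000 ω} :=
    Set.ext mem_omega0_iff_avoids11And1000
  rw [dotUnion, hΩ₀, mem_dot_setOf_avoids11And1000_iff hd, Avoids11And1000]
  simp only [not_exists]
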